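/- For every integer n ≥ 0, the number of single Dyck paths of length 2n and height h ≥ 1 satisfies P_n(h) = Σ_{y=1}^{h} P_n(y, h−1); that is, the count of Dyck paths of length 2n with height exactly h equals the number of ordered pairs of Dyck paths of total length 2n whose heights are y and h−1 for some 1 ≤ y ≤ h. -/

import Mathlib

/-- A Dyck path: a finite sequence of ±1 steps with all partial sums nonnegative
and total sum zero. -/
def IsDyckPath (p : List ℤ) : Prop :=
  (∀ s ∈ p, s = 1 ∨ s = -1) ∧ (∀ k, 0 ≤ (p.take k).sum) ∧ p.sum = 0

/-- The height of a path: the maximum of its partial sums (0 for the empty path). -/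
def pathHeight (p : List ℤ) : ℕ :=
  Finset.sup (Finset.range (p.length + 1)) (fun k => ((p.take k).sum).toNat)

/-- Super-Catalan numbers `T(m,n) = (2m)!(2n)!/(2·m!·n!·(m+n)!)`, as a rational number. -/
def superCatalan (m n : ℕ) : ℚ :=
  ((2 * m).factorial * (2 * n).factorial : ℚ) /
    (2 * m.factorial * n.factorial * (m + n).factorial)

/-- `G n m k`: the number of `m`-tuples of Dyck paths of total length `2n` all of whose
pairwise height differences are at most `k` (this is `0` when `n < 0`). -/
noncomputable def G (n : ℤ) (m k : ℕ) : ℕ :=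
  Nat.card {p : Fin m → List ℤ //
    (∀ i, IsDyckPath (p i)) ∧
    (∑ i, ((p i).length : ℤ)) = 2 * n ∧
    ∀ i j, |(pathHeight (p i) : ℤ) - (pathHeight (p j) : ℤ)| ≤ (k : ℤ)}

/-- The path-height function `P n [a₁,…,aₘ]`: the number of `m`-tuples of Dyck paths
of total length `2n` whose `i`-th path has height `aᵢ`. -/
noncomputable def P (n : ℤ) (a : List ℕ) : ℕ :=
  Nat.card {p : Fin a.length → List ℤ //
    (∀ i, IsDyckPath (p i)) ∧
    (∑ i, ((p i).length : ℤ)) = 2 * n ∧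
    ∀ i, pathHeight (p i) = a.get i}

/-- `Qx n x [a₀,…,a_k]` is `P n` evaluated at `a₀` copies of `x`, `a₁` copies of `x+1`, …,
`a_k` copies of `x+k`. -/
noncomputable def Qx (n : ℤ) (x : ℕ) (a : List ℕ) : ℕ :=
  P n (a.zipIdx.flatMap fun q => List.replicate q.1 (x + q.2))

/-- The grouped path-height function `Q n a = ∑_{x=0}^∞ Qx n x a`. Whenever some entry
of `a` is positive (as in every application below) all terms with `x > n` vanish, since
a Dyck path of height at least `x` has length at least `2x`; so the infinite sum equals
its truncation at `x = n`. -/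
noncomputable def Q (n : ℤ) (a : List ℕ) : ℕ :=
  ∑ x ∈ Finset.range (n.toNat + 1), Qx n x a


/-!
Cut a path `π` of height `h` at its last visit to height `h`: the maximal excursion above the
axis containing that visit is an arch `U C D` with `C` of height `h - 1`, so `π = P U C D S`
where `P` is any Dyck path of height at most `h` and `S` has height at most `h - 1`. Sending `π`
to the pair `(U S D P, C)` is a bijection onto the pairs whose second path has height `h - 1`
and whose first path is nonempty of height at most `h`: the first-return decomposition of
`U S D P` recovers `S` and `P`.
-/

open Set

def partialSum (p : List ℤ) (k : ℕ) : ℤ := (p.take k).sum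

def arch (C : List ℤ) : List ℤ := 1 :: (C ++ [-1])

section PartialSum

variable {p q : List ℤ} {k : ℕ}

@[simp] lemma partialSum_zero (p : List ℤ) : partialSum p 0 = 0 := by simp [partialSum]

lemma partialSum_of_length_le (hk : p.length ≤ k) : partialSum p k = p.sum := by
  simp [partialSum, List.take_of_length_le hk]

lemma partialSum_take (p : List ℤ) (m k : ℕ) :
    partialSum (p.take m) k = partialSum p (min k m) := by
  simp [partialSum, List.take_take]

lemma partialSum_append (p q : List ℤ) (k : ℕ) :
    partialSum (p ++ q) k = partialSum p k + partialSum q (k - p.length) := by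
  simp [partialSum, List.take_append]

lemma partialSum_append_of_le (hk : k ≤ p.length) : partialSum (p ++ q) k = partialSum p k := by
  simp [partialSum_append, Nat.sub_eq_zero_of_le hk]

lemma partialSum_append_length_add (hp : p.sum = 0) (k : ℕ) :
    partialSum (p ++ q) (p.length + k) = partialSum q k := by
  rw [partialSum_append, partialSum_of_length_le (by omega), hp, zero_add,
    Nat.add_sub_cancel_left]

lemma partialSum_cons_succ (a : ℤ) (p : List ℤ) (k : ℕ) :
    partialSum (a :: p) (k + 1) = a + partialSum p k := by
  simp [partialSum]

end PartialSum

section Height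

variable {p q : List ℤ}

@[simp] lemma pathHeight_nil : pathHeight [] = 0 := by simp [pathHeight]

lemma partialSum_le_pathHeight (p : List ℤ) (k : ℕ) : partialSum p k ≤ pathHeight p := by
  have hk : min k p.length ∈ Finset.range (p.length + 1) := by simp
  have hle := Finset.le_sup (f := fun k => (partialSum p k).toNat) hk
  have hmin : partialSum p (min k p.length) = partialSum p k := by
    rw [← partialSum_take, List.take_length]
  rw [← hmin]
  exact (Int.self_le_toNat _).trans (by exact_mod_cast hle)

lemma pathHeight_le_iff {m : ℕ} : pathHeight p ≤ m ↔ ∀ k, partialSum p k ≤ m :=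
  ⟨fun h k => (partialSum_le_pathHeight p k).trans (by exact_mod_cast h),
    fun h => Finset.sup_le fun k _ => Int.toNat_le.2 (h k)⟩

lemma exists_partialSum_eq_pathHeight (p : List ℤ) :
    ∃ k ≤ p.length, partialSum p k = pathHeight p := by
  obtain ⟨k, hk, hsup⟩ := Finset.exists_mem_eq_sup (Finset.range (p.length + 1))
    Finset.nonempty_range_add_one fun k => (partialSum p k).toNat
  rw [Finset.mem_range, Nat.lt_succ_iff] at hk
  change pathHeight p = (partialSum p k).toNat at hsup
  -- `pathHeight` clips at zero, so a height of `0` is attained by the empty prefix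
  rcases Nat.eq_zero_or_pos (pathHeight p) with h0 | hpos
  · exact ⟨0, Nat.zero_le _, by simp [h0]⟩
  · exact ⟨k, hk, by omega⟩

lemma pathHeight_append (hp : p.sum = 0) :
    pathHeight (p ++ q) = max (pathHeight p) (pathHeight q) := by
  refine le_antisymm (pathHeight_le_iff.2 fun k => ?_) (max_le ?_ ?_)
  · rcases le_total k p.length with hk | hk
    · rw [partialSum_append_of_le hk]
      exact (partialSum_le_pathHeight p k).trans (by exact_mod_cast le_max_left _ _)
    · obtain ⟨j, rfl⟩ := Nat.exists_eq_add_of_le hk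
      rw [partialSum_append_length_add hp]
      exact (partialSum_le_pathHeight q j).trans (by exact_mod_cast le_max_right _ _)
  · obtain ⟨k, hk, hpk⟩ := exists_partialSum_eq_pathHeight p
    have := partialSum_le_pathHeight (p ++ q) k
    rw [partialSum_append_of_le hk, hpk] at this
    exact_mod_cast this
  · obtain ⟨k, -, hqk⟩ := exists_partialSum_eq_pathHeight q
    have := partialSum_le_pathHeight (p ++ q) (p.length + k)
    rw [partialSum_append_length_add hp, hqk] at this
    exact_mod_cast this

@[simp] lemma sum_arch (C : List ℤ) : (arch C).sum = C.sum := by simp [arch]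

@[simp] lemma length_arch (C : List ℤ) : (arch C).length = C.length + 2 := by simp [arch]

lemma arch_injective : Function.Injective arch := fun C C' h => by
  simpa [arch] using h

lemma partialSum_arch_succ_of_le {C : List ℤ} {k : ℕ} (hk : k ≤ C.length) :
    partialSum (arch C) (k + 1) = 1 + partialSum C k := by
  rw [arch, partialSum_cons_succ, partialSum_append_of_le hk]

lemma partialSum_arch_succ_of_lt {C : List ℤ} {k : ℕ} (hk : C.length < k) :
    partialSum (arch C) (k + 1) = partialSum C k := by
  rw [partialSum_of_length_le (by rw [length_arch]; omega), partialSum_of_length_le hk.le,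
    sum_arch]

lemma pathHeight_arch (C : List ℤ) : pathHeight (arch C) = pathHeight C + 1 := by
  refine le_antisymm (pathHeight_le_iff.2 fun k => ?_) ?_
  · rcases k with _ | k
    · rw [partialSum_zero]; positivity
    · have := partialSum_le_pathHeight C k
      rcases le_or_gt k C.length with hk | hk
      · rw [partialSum_arch_succ_of_le hk]; push_cast; omega
      · rw [partialSum_arch_succ_of_lt hk]; omega
  · obtain ⟨k, hk, hCk⟩ := exists_partialSum_eq_pathHeight C
    have := partialSum_le_pathHeight (arch C) (k + 1)
    rw [partialSum_arch_succ_of_le hk, hCk] at this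
    omega

lemma pathHeight_arch_append {C : List ℤ} (S : List ℤ) (hC : C.sum = 0) :
    pathHeight (arch C ++ S) = max (pathHeight C + 1) (pathHeight S) := by
  rw [pathHeight_append (by simp [hC]), pathHeight_arch]

lemma pathHeight_append_arch_append {P C : List ℤ} (S : List ℤ) (hP : P.sum = 0)
    (hC : C.sum = 0) :
    pathHeight (P ++ arch C ++ S) =
      max (pathHeight P) (max (pathHeight C + 1) (pathHeight S)) := by
  rw [List.append_assoc, pathHeight_append hP, pathHeight_arch_append S hC]

end Height

section Dyck

variable {p q : List ℤ}

lemma isDyckPath_iff :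
    IsDyckPath p ↔
      (∀ s ∈ p, s = 1 ∨ s = -1) ∧ (∀ k, 0 ≤ partialSum p k) ∧ p.sum = 0 :=
  Iff.rfl

lemma IsDyckPath.sum_eq_zero (hp : IsDyckPath p) : p.sum = 0 := hp.2.2

lemma IsDyckPath.partialSum_nonneg (hp : IsDyckPath p) (k : ℕ) : 0 ≤ partialSum p k := hp.2.1 k

lemma isDyckPath_nil : IsDyckPath [] := ⟨by simp, by simp, by simp⟩

lemma isDyckPath_append_iff (hp : p.sum = 0) :
    IsDyckPath (p ++ q) ↔ IsDyckPath p ∧ IsDyckPath q := by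
  simp only [isDyckPath_iff]
  constructor
  · rintro ⟨hstep, hnonneg, hsum⟩
    refine ⟨⟨fun s hs => hstep s (List.mem_append_left q hs), fun k => ?_, hp⟩,
      ⟨fun s hs => hstep s (List.mem_append_right p hs), fun k => ?_,
        by simpa [hp] using hsum⟩⟩
    · rcases le_total k p.length with hk | hk
      · simpa [partialSum_append_of_le hk] using hnonneg k
      · rw [partialSum_of_length_le hk, hp]
    · simpa [partialSum_append_length_add hp] using hnonneg (p.length + k)
  · rintro ⟨⟨hpstep, hpnonneg, -⟩, ⟨hqstep, hqnonneg, hqsum⟩⟩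
    refine ⟨fun s hs => (List.mem_append.1 hs).elim (hpstep s) (hqstep s), fun k => ?_,
      by simp [hp, hqsum]⟩
    have := hpnonneg k
    have := hqnonneg (k - p.length)
    rw [partialSum_append]
    omega

lemma IsDyckPath.append (hp : IsDyckPath p) (hq : IsDyckPath q) : IsDyckPath (p ++ q) :=
  (isDyckPath_append_iff hp.sum_eq_zero).2 ⟨hp, hq⟩

lemma isDyckPath_arch {C : List ℤ} (hC : IsDyckPath C) : IsDyckPath (arch C) := by
  refine ⟨fun s hs => ?_, fun k => ?_, by simp [hC.sum_eq_zero]⟩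
  · simp only [arch, List.mem_cons, List.mem_append, List.not_mem_nil, or_false] at hs
    rcases hs with rfl | hs | rfl
    exacts [Or.inl rfl, hC.1 s hs, Or.inr rfl]
  · change 0 ≤ partialSum (arch C) k
    rcases k with _ | k
    · simp
    rcases le_or_gt k C.length with hk | hk
    · rw [partialSum_arch_succ_of_le hk]; linarith [hC.partialSum_nonneg k]
    · rw [partialSum_arch_succ_of_lt hk]; exact hC.partialSum_nonneg k

lemma IsDyckPath.eq_arch_of_partialSum_pos (hp : IsDyckPath p) (hne : p ≠ [])
    (hpos : ∀ k, 0 < k → k < p.length → 0 < partialSum p k) :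
    ∃ C, IsDyckPath C ∧ p = arch C := by
  obtain ⟨a, l, rfl⟩ := List.exists_cons_of_ne_nil hne
  have ha : a = 1 ∨ a = -1 := hp.1 a List.mem_cons_self
  have ha1 : a = 1 := by
    have := hp.partialSum_nonneg 1
    simp only [partialSum, List.take_succ_cons, List.take_zero, List.sum_singleton] at this
    omega
  subst ha1
  rcases List.eq_nil_or_concat' l with rfl | ⟨C, z, rfl⟩
  · simpa using hp.sum_eq_zero
  have hz : z = 1 ∨ z = -1 := hp.1 z (by simp)
  have hsum : 1 + C.sum + z = 0 := by simpa [add_assoc] using hp.sum_eq_zero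
  have hpsum : ∀ k ≤ C.length, partialSum (1 :: (C ++ [z])) (k + 1) = 1 + partialSum C k :=
    fun k hk => by rw [partialSum_cons_succ, partialSum_append_of_le hk]
  have hCsum : 0 ≤ C.sum := by
    have := hpos (C.length + 1) (by omega) (by simp)
    rw [hpsum _ le_rfl, partialSum_of_length_le le_rfl] at this
    omega
  obtain rfl : z = -1 := by omega
  refine ⟨C, ⟨fun s hs => hp.1 s (by simp [hs]), fun k => ?_, by omega⟩, rfl⟩
  change 0 ≤ partialSum C k
  rcases le_or_gt k C.length with hk | hk
  · have := hpos (k + 1) (by omega) (by simp only [List.length_cons, List.length_append]; omega)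
    rw [hpsum k hk] at this
    omega
  · rw [partialSum_of_length_le hk.le]
    omega

lemma IsDyckPath.exists_eq_arch_append (hp : IsDyckPath p) (hne : p ≠ []) :
    ∃ C S, IsDyckPath C ∧ IsDyckPath S ∧ p = arch C ++ S := by
  have hend : 0 < p.length ∧ partialSum p p.length = 0 :=
    ⟨List.length_pos_iff.2 hne, by rw [partialSum_of_length_le le_rfl, hp.sum_eq_zero]⟩
  have hret : ∃ b, 0 < b ∧ partialSum p b = 0 := ⟨p.length, hend⟩
  set b := Nat.find hret
  obtain ⟨hb0, hbret⟩ := Nat.find_spec hret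
  have hble : b ≤ p.length := Nat.find_min' hret hend
  have hsplit := List.take_append_drop b p
  obtain ⟨hprefix, hsuffix⟩ := (isDyckPath_append_iff hbret).1 (hsplit ▸ hp)
  obtain ⟨C, hC, hCeq⟩ := hprefix.eq_arch_of_partialSum_pos
    (by simp only [Ne, List.take_eq_nil_iff, not_or]; exact ⟨hb0.ne', hne⟩) fun k hk0 hkb => by
      simp only [List.length_take, lt_min_iff] at hkb
      rw [partialSum_take, min_eq_left hkb.1.le]
      exact (hp.partialSum_nonneg k).lt_of_ne' fun h => Nat.find_min hret hkb.1 ⟨hk0, h⟩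
  exact ⟨C, p.drop b, hC, hsuffix, by rw [← hCeq, hsplit]⟩

lemma arch_append_inj {C C' S S' : List ℤ} (hC : IsDyckPath C) (hC' : IsDyckPath C')
    (h : arch C ++ S = arch C' ++ S') : C = C' ∧ S = S' := by
  -- the shorter arch would end at a point where the longer one is still above the axis
  have shorter : ∀ {C C' S S' : List ℤ}, IsDyckPath C → IsDyckPath C' →
      arch C ++ S = arch C' ++ S' → ¬ C.length < C'.length := by
    intro C C' S S' hC hC' h hlt
    have hend :=
      partialSum_append_length_add (p := arch C) (q := S) (by simpa using hC.sum_eq_zero) 0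
    rw [h, length_arch, add_zero, partialSum_append_of_le (by rw [length_arch]; omega),
      partialSum_arch_succ_of_le (by omega), partialSum_zero] at hend
    linarith [hC'.partialSum_nonneg (C.length + 1)]
  have hlen : C.length = C'.length := by
    have := shorter hC hC' h
    have := shorter hC' hC h.symm
    omega
  obtain ⟨harch, rfl⟩ := List.append_inj h (by simp [hlen])
  exact ⟨arch_injective harch, rfl⟩

theorem IsDyckPath.exists_eq_append_arch_append {π : List ℤ} {h : ℕ} (hπ : IsDyckPath π)
    (hheight : pathHeight π = h + 1) :
    ∃ P C S, IsDyckPath P ∧ IsDyckPath C ∧ IsDyckPath S ∧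
      pathHeight C = h ∧ pathHeight S ≤ h ∧ π = P ++ arch C ++ S := by
  obtain ⟨X, Y, hX, hY, hπeq⟩ := hπ.exists_eq_arch_append (by rintro rfl; simp at hheight)
  have hmax : pathHeight π = max (pathHeight X + 1) (pathHeight Y) := by
    rw [hπeq, pathHeight_arch_append Y hX.sum_eq_zero]
  by_cases hY_le : pathHeight Y ≤ h
  · exact ⟨[], X, Y, isDyckPath_nil, hX, hY, by omega, hY_le, by simpa using hπeq⟩
  · have : Y.length < π.length := by rw [hπeq]; simp
    obtain ⟨P, C, S, hP, hC, hS, hCh, hSh, rfl⟩ :=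
      hY.exists_eq_append_arch_append (h := h) (by omega)
    exact ⟨arch X ++ P, C, S, (isDyckPath_arch hX).append hP, hC, hS, hCh, hSh,
      by simp [hπeq]⟩
termination_by π.length

lemma pathHeight_lt_of_arch_append_eq {C S P' C' S' : List ℤ} (hC : IsDyckPath C)
    (hP' : IsDyckPath P') (hP'ne : P' ≠ []) (hC' : IsDyckPath C')
    (h : arch C ++ S = P' ++ arch C' ++ S') : pathHeight C' < pathHeight S := by
  obtain ⟨X, Y, hX, hY, rfl⟩ := hP'.exists_eq_arch_append hP'ne
  have hS := (arch_append_inj (S' := Y ++ arch C' ++ S') hC hX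
    (by simpa only [List.append_assoc] using h)).2
  rw [hS, pathHeight_append_arch_append _ hY.sum_eq_zero hC'.sum_eq_zero]
  omega

theorem eq_of_append_arch_append_eq {h : ℕ} {P C S P' C' S' : List ℤ}
    (hP : IsDyckPath P) (hC : IsDyckPath C) (hCh : pathHeight C = h) (hSh : pathHeight S ≤ h)
    (hP' : IsDyckPath P') (hC' : IsDyckPath C') (hC'h : pathHeight C' = h)
    (hS'h : pathHeight S' ≤ h) (heq : P ++ arch C ++ S = P' ++ arch C' ++ S') :
    P = P' ∧ C = C' ∧ S = S' := by
  rcases eq_or_ne P [] with rfl | hPne <;> rcases eq_or_ne P' [] with rfl | hP'ne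
  · obtain ⟨rfl, rfl⟩ := arch_append_inj hC hC' heq
    exact ⟨rfl, rfl, rfl⟩
  · have := pathHeight_lt_of_arch_append_eq hC hP' hP'ne hC' heq
    omega
  · have := pathHeight_lt_of_arch_append_eq hC' hP hPne hC heq.symm
    omega
  · obtain ⟨X, Y, hX, hY, rfl⟩ := hP.exists_eq_arch_append hPne
    obtain ⟨X', Y', hX', hY', rfl⟩ := hP'.exists_eq_arch_append hP'ne
    simp only [List.append_assoc] at heq
    obtain ⟨rfl, heq'⟩ := arch_append_inj hX hX' heq
    have : Y.length < (arch X ++ Y).length := by simp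
    obtain ⟨rfl, rfl, rfl⟩ := eq_of_append_arch_append_eq hY hC hCh hSh hY' hC' hC'h hS'h
      (by simpa only [List.append_assoc] using heq')
    exact ⟨rfl, rfl, rfl⟩
termination_by P.length

def dyckPaths (n a : ℕ) : Set (List ℤ) :=
  {p | IsDyckPath p ∧ p.length = 2 * n ∧ pathHeight p = a}

def dyckPairs (n a b : ℕ) : Set (List ℤ × List ℤ) :=
  {(p, q) | IsDyckPath p ∧ IsDyckPath q ∧ p.length + q.length = 2 * n ∧
    pathHeight p = a ∧ pathHeight q = b}

/-- The triples `(P, C, S)` for which `P ++ arch C ++ S` is the last-peak decomposition of a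
path of length `2n` and height `h + 1`. -/
def lastPeakTriples (n h : ℕ) : Set (List ℤ × List ℤ × List ℤ) :=
  {(P, C, S) | IsDyckPath P ∧ IsDyckPath C ∧ IsDyckPath S ∧
    P.length + C.length + S.length + 2 = 2 * n ∧
    pathHeight P ≤ h + 1 ∧ pathHeight C = h ∧ pathHeight S ≤ h}

lemma P_singleton (n a : ℕ) : P n [a] = (dyckPaths n a).ncard := by
  rw [← Nat.card_coe_set_eq]
  refine Nat.card_congr (Equiv.subtypeEquiv (Equiv.funUnique (Fin 1) (List ℤ)) fun p => ?_)
  have hlen (m : ℕ) : (m : ℤ) = 2 * n ↔ m = 2 * n := by omega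
  simp [dyckPaths, Fin.forall_fin_one, hlen]

lemma P_pair (n a b : ℕ) : P n [a, b] = (dyckPairs n a b).ncard := by
  rw [← Nat.card_coe_set_eq]
  refine Nat.card_congr (Equiv.subtypeEquiv (piFinTwoEquiv fun _ => List ℤ) fun p => ?_)
  have hlen (l m : ℕ) : (l : ℤ) + m = 2 * n ↔ l + m = 2 * n := by omega
  simp [dyckPairs, Fin.forall_fin_two, and_assoc, hlen]

lemma finite_setOf_isDyckPath_length_le (N : ℕ) :
    {p : List ℤ | IsDyckPath p ∧ p.length ≤ N}.Finite := by
  refine ((List.finite_length_le Bool N).image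
    (List.map fun b => if b then (1 : ℤ) else -1)).subset fun p hp => ?_
  refine ⟨p.map (· = 1), by simpa using hp.2, ?_⟩
  conv_rhs => rw [← List.map_id p]
  simp only [List.map_map]
  refine List.map_congr_left fun s hs => ?_
  rcases hp.1.1 s hs with rfl | rfl <;> simp

lemma finite_dyckPairs (n a b : ℕ) : (dyckPairs n a b).Finite := by
  refine ((finite_setOf_isDyckPath_length_le (2 * n)).prod
    (finite_setOf_isDyckPath_length_le (2 * n))).subset fun q hq => ?_
  obtain ⟨h1, h2, hlen, -⟩ := hq
  exact ⟨⟨h1, by omega⟩, ⟨h2, by omega⟩⟩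

lemma ncard_biUnion_dyckPairs (n h : ℕ) :
    (⋃ y ∈ Set.Icc 1 (h + 1), dyckPairs n y h).ncard =
      ∑ y ∈ Finset.Icc 1 (h + 1), (dyckPairs n y h).ncard := by
  rw [← Finset.coe_Icc, (Finset.Icc 1 (h + 1)).finite_toSet.ncard_biUnion
    (fun y _ => finite_dyckPairs n y h), finsum_mem_coe_finset]
  intro y _ y' _ hne
  exact Set.disjoint_left.2 fun q hq hq' => hne (hq.2.2.2.1.symm.trans hq'.2.2.2.1)

lemma bijOn_lastPeak (n h : ℕ) :
    BijOn (fun (P, C, S) => P ++ arch C ++ S) (lastPeakTriples n h) (dyckPaths n (h + 1)) := by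
  refine ⟨?mapsTo, ?injOn, ?surjOn⟩
  case mapsTo =>
    rintro ⟨P, C, S⟩ ⟨hP, hC, hS, hlen, hPh, hCh, hSh⟩
    refine ⟨(hP.append (isDyckPath_arch hC)).append hS,
      by simp only [List.length_append, length_arch]; omega, ?_⟩
    rw [pathHeight_append_arch_append _ hP.sum_eq_zero hC.sum_eq_zero]
    omega
  case injOn =>
    rintro ⟨P, C, S⟩ ⟨hP, hC, -, -, -, hCh, hSh⟩
      ⟨P', C', S'⟩ ⟨hP', hC', -, -, -, hC'h, hS'h⟩ heq
    obtain ⟨rfl, rfl, rfl⟩ := eq_of_append_arch_append_eq hP hC hCh hSh hP' hC' hC'h hS'h heq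
    rfl
  case surjOn =>
    rintro π ⟨hπ, hlen, hheight⟩
    obtain ⟨P, C, S, hP, hC, hS, hCh, hSh, rfl⟩ := hπ.exists_eq_append_arch_append hheight
    rw [pathHeight_append_arch_append _ hP.sum_eq_zero hC.sum_eq_zero] at hheight
    simp only [List.length_append, length_arch] at hlen
    exact ⟨(P, C, S), ⟨hP, hC, hS, by omega, by omega, hCh, hSh⟩, rfl⟩

lemma bijOn_firstReturn (n h : ℕ) :
    BijOn (fun (P, C, S) => (arch S ++ P, C)) (lastPeakTriples n h)
      (⋃ y ∈ Set.Icc 1 (h + 1), dyckPairs n y h) := by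
  refine ⟨?mapsTo, ?injOn, ?surjOn⟩
  case mapsTo =>
    rintro ⟨P, C, S⟩ ⟨hP, hC, hS, hlen, hPh, hCh, hSh⟩
    have hheight := pathHeight_arch_append P hS.sum_eq_zero
    refine mem_biUnion (x := pathHeight (arch S ++ P)) (mem_Icc.2 ⟨by omega, by omega⟩)
      ⟨(isDyckPath_arch hS).append hP, hC,
        by simp only [List.length_append, length_arch]; omega, rfl, hCh⟩
  case injOn =>
    rintro ⟨P, C, S⟩ ⟨-, -, hS, -⟩ ⟨P', C', S'⟩ ⟨-, -, hS', -⟩ heq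
    simp only [Prod.mk.injEq] at heq
    obtain ⟨rfl, rfl⟩ := arch_append_inj hS hS' heq.1
    rw [heq.2]
  case surjOn =>
    rintro ⟨D, C⟩ hq
    simp only [mem_iUnion, mem_Icc] at hq
    obtain ⟨y, ⟨hy1, hyh⟩, hD, hC, hlen, hDh, hCh⟩ := hq
    obtain ⟨X, Y, hX, hY, rfl⟩ :=
      hD.exists_eq_arch_append (by rintro rfl; rw [pathHeight_nil] at hDh; omega)
    have hheight := pathHeight_arch_append Y hX.sum_eq_zero
    simp only [List.length_append, length_arch] at hlen
    exact ⟨(Y, C, X), ⟨hY, hC, hX, by omega, by omega, hCh, by omega⟩, rfl⟩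

/-- For `n ≥ 0` and `h ≥ 1`, the number of Dyck paths of length `2n` and height `h`
satisfies `P_n(h) = ∑_{y=1}^{h} P_n(y, h−1)`. -/
theorem single_path_splitter (n : ℕ) (h : ℕ) (hh : 1 ≤ h) :
    P (n : ℤ) [h] = ∑ y ∈ Finset.Icc 1 h, P (n : ℤ) [y, h - 1] := by
  obtain ⟨k, rfl⟩ := Nat.exists_eq_add_of_le' hh
  simp only [P_singleton, P_pair, Nat.add_sub_cancel]
  rw [← (bijOn_lastPeak n k).ncard_eq, (bijOn_firstReturn n k).ncard_eq,
    ncard_biUnion_dyckPairs]
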